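/- Let A be the n×n nilpotent Jordan-type matrix with ones on the superdiagonal and zeros elsewhere (the higher-order integrator matrix). If γ is an orthogonal n×n matrix commuting with A, then γ = I_n or γ = −I_n. -/

import Mathlib

/-!
Commuting with the shift makes `M` upper triangular and constant along its diagonals, so its
first column is `M₀₀ e₀`. The first row of `Mᵀ M = 1` then reads `M₀₀ M₀ⱼ = δ₀ⱼ`: this gives
`M₀₀² = 1` and kills the rest of the first row, which by the Toeplitz structure kills every
off-diagonal entry.
Hence `M = M₀₀ • 1` with `M₀₀ = ±1`.
-/

open Matrix

def shiftMatrix (n : ℕ) (R : Type*) [Zero R] [One R] : Matrix (Fin n) (Fin n) R :=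
  of fun i j => if (i : ℕ) + 1 = j then 1 else 0

section Semiring

variable {R : Type*} [Semiring R] {n : ℕ} (M : Matrix (Fin n) (Fin n) R)

theorem shiftMatrix_mul_apply_of_val_eq_succ {i i' : Fin n} (hi : (i' : ℕ) = i + 1) (j : Fin n) :
    (shiftMatrix n R * M) i j = M i' j := by
  rw [mul_apply, Finset.sum_eq_single i']
  · simp [shiftMatrix, hi]
  · rintro k - hk
    simp [shiftMatrix, ← hi, Ne.symm (Fin.val_ne_of_ne hk)]
  · simp

theorem mul_shiftMatrix_apply_of_val_eq_succ (i : Fin n) {j j' : Fin n} (hj : (j' : ℕ) = j + 1) :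
    (M * shiftMatrix n R) i j' = M i j := by
  rw [mul_apply, Finset.sum_eq_single j]
  · simp [shiftMatrix, hj]
  · rintro k - hk
    simp [shiftMatrix, hj, Fin.val_ne_of_ne hk]
  · simp

theorem mul_shiftMatrix_apply_of_val_eq_zero (i : Fin n) {j : Fin n} (hj : (j : ℕ) = 0) :
    (M * shiftMatrix n R) i j = 0 := by
  rw [mul_apply]
  exact Finset.sum_eq_zero fun k _ => by simp [shiftMatrix, hj]

variable {M}

theorem apply_eq_of_commute_shiftMatrix_of_val_eq_add (hM : Commute (shiftMatrix n R) M)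
    {i j i' j' : Fin n} {k : ℕ} (hi : (i' : ℕ) = i + k) (hj : (j' : ℕ) = j + k) :
    M i' j' = M i j := by
  induction k generalizing i' j' with
  | zero => rw [Fin.ext hi, Fin.ext hj]
  | succ k ih =>
    let p : Fin n := ⟨i + k, by omega⟩
    let q : Fin n := ⟨j + k, by omega⟩
    calc M i' j' = (shiftMatrix n R * M) p j' :=
          (shiftMatrix_mul_apply_of_val_eq_succ M (by dsimp [p]; omega) j').symm
      _ = (M * shiftMatrix n R) p j' := by rw [hM.eq]
      _ = M p q := mul_shiftMatrix_apply_of_val_eq_succ M p (by dsimp [q]; omega)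
      _ = M i j := ih rfl rfl

theorem apply_eq_zero_of_commute_shiftMatrix (hM : Commute (shiftMatrix n R) M)
    {i j : Fin n} (hji : j < i) : M i j = 0 := by
  let p : Fin n := ⟨i - j - 1, by omega⟩
  calc M i j = M ⟨i - j, by omega⟩ ⟨0, by omega⟩ :=
        apply_eq_of_commute_shiftMatrix_of_val_eq_add hM (k := j) (by dsimp; omega)
          (by dsimp; omega)
    _ = (shiftMatrix n R * M) p ⟨0, by omega⟩ :=
        (shiftMatrix_mul_apply_of_val_eq_succ M (by dsimp [p]; omega) _).symm
    _ = 0 := by rw [hM.eq, mul_shiftMatrix_apply_of_val_eq_zero M p rfl]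

theorem apply_eq_apply_zero_of_commute_shiftMatrix (hM : Commute (shiftMatrix n R) M)
    {i j : Fin n} (hij : i ≤ j) : M i j = M ⟨0, by omega⟩ ⟨j - i, by omega⟩ :=
  apply_eq_of_commute_shiftMatrix_of_val_eq_add hM (k := i) (by dsimp; omega) (by dsimp; omega)

end Semiring

section Ring

variable {R : Type*} [Ring R] {n : ℕ} {M : Matrix (Fin n) (Fin n) R}

theorem transpose_mul_self_apply_zero_of_commute_shiftMatrix (hM : Commute (shiftMatrix n R) M)
    (hn : 0 < n) (j : Fin n) :
    (Mᵀ * M) ⟨0, hn⟩ j = M ⟨0, hn⟩ ⟨0, hn⟩ * M ⟨0, hn⟩ j := by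
  rw [mul_apply, Finset.sum_eq_single ⟨0, hn⟩ (fun k _ hk => ?_) (by simp), transpose_apply]
  have hk : ⟨0, hn⟩ < k := Fin.lt_def.mpr (Nat.pos_of_ne_zero fun h => hk (Fin.ext h))
  rw [transpose_apply, apply_eq_zero_of_commute_shiftMatrix hM hk, zero_mul]

theorem apply_zero_zero_mul_self_of_commute_shiftMatrix (hM : Commute (shiftMatrix n R) M)
    (hn : 0 < n) (hMt : Mᵀ * M = 1) :
    M ⟨0, hn⟩ ⟨0, hn⟩ * M ⟨0, hn⟩ ⟨0, hn⟩ = 1 := by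
  rw [← transpose_mul_self_apply_zero_of_commute_shiftMatrix hM hn, hMt, one_apply_eq]

theorem eq_smul_one_of_commute_shiftMatrix (hM : Commute (shiftMatrix n R) M) (hn : 0 < n)
    (hMt : Mᵀ * M = 1) : M = M ⟨0, hn⟩ ⟨0, hn⟩ • 1 := by
  set z : Fin n := ⟨0, hn⟩
  have hrow : ∀ j, j ≠ z → M z j = 0 := fun j hj => by
    rw [← one_mul (M z j), ← apply_zero_zero_mul_self_of_commute_shiftMatrix hM hn hMt,
      mul_assoc, ← transpose_mul_self_apply_zero_of_commute_shiftMatrix hM hn, hMt,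
      one_apply_ne hj.symm, mul_zero]
  ext i j
  rcases lt_trichotomy i j with hij | rfl | hji
  · rw [apply_eq_apply_zero_of_commute_shiftMatrix hM hij.le, hrow ⟨j - i, by omega⟩
      (Fin.ne_of_gt (Fin.lt_def.mpr (by dsimp [z]; omega)))]
    simp [hij.ne]
  · rw [apply_eq_apply_zero_of_commute_shiftMatrix hM le_rfl]
    simp [z]
  · rw [apply_eq_zero_of_commute_shiftMatrix hM hji]
    simp [hji.ne']

theorem eq_one_or_eq_neg_one_of_commute_shiftMatrix [NoZeroDivisors R]
    (hM : Commute (shiftMatrix n R) M) (hMt : Mᵀ * M = 1) : M = 1 ∨ M = -1 := by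
  rcases Nat.eq_zero_or_pos n with rfl | hn
  · exact .inl (Subsingleton.elim _ _)
  rw [eq_smul_one_of_commute_shiftMatrix hM hn hMt]
  rcases mul_self_eq_one_iff.mp (apply_zero_zero_mul_self_of_commute_shiftMatrix hM hn hMt)
    with h | h <;> simp [h]

end Ring

/-- If `γ` is an orthogonal matrix commuting with the nilpotent higher-order
integrator matrix `A` (ones on the superdiagonal, zeros elsewhere), then
`γ = I` or `γ = -I`. -/
theorem stmt_6 {n : ℕ} (A γ : Matrix (Fin n) (Fin n) ℝ)
    (hA : ∀ i j : Fin n, A i j = if (i : ℕ) + 1 = (j : ℕ) then 1 else 0)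
    (hγ : γᵀ * γ = 1) (hcomm : A * γ = γ * A) :
    γ = 1 ∨ γ = -1 := by
  obtain rfl : A = shiftMatrix n ℝ := ext hA
  exact eq_one_or_eq_neg_one_of_commute_shiftMatrix hcomm hγ
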